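/- (Pivotal bound of the Energy Lemma) Let 0 ≤ α < n, 0 < δ ≤ 1, and let K(x,y) be an α-standard fractional kernel of order 1+δ with constant C_CZ. Let ω be a positive locally finite Borel measure on ℝⁿ, let J be a cube with 0 < ω(J) < ∞, set m_J := ω(J)^{−1}∫_J x dω(x), and let ν be a positive locally finite Borel measure with supp ν ∩ 2J = ∅ and P^α(J,ν) < ∞. Then for every Ψ ∈ L²(ω) supported in J with ∫ Ψ dω = 0: |∫ ( ∫_J (K(x,y) − K(m_J,y)) Ψ(x) dω(x) ) dν(y)| ≤ C·C_CZ·‖Ψ‖_{L²(ω)} · P^α(J,ν) · √(ω(J)), with C depending only on n, α and δ. -/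

import Mathlib

/-!
Off `2J` the kernel is smooth in its first variable: if `y ∉ 2J`, every point of the closed
cube `J̄` lies at distance at least `(ℓ(J) + |y - c_J|) / (3 + √n)` from `y`. The closed cube is
convex and contains both `x ∈ J` and the mean `m_J`, so the mean value theorem and the gradient
bound `|∇ₓK(z,y)| ≤ C_CZ |z - y|^{α-n-1}` give
`|K(x,y) - K(m_J,y)| ≲ C_CZ ℓ(J) / (ℓ(J) + |y - c_J|)^{n+1-α}`, the Poisson kernel of `J`.
Integrating against `|Ψ| dω` over `J`, Cauchy–Schwarz `∫_J |Ψ| dω ≤ ‖Ψ‖_{L²(ω)} ω(J)^{1/2}`,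
and integrating in `ν`, which does not charge `2J`, yields `P^α(J,ν)`.
-/

open MeasureTheory
open scoped ENNReal NNReal

noncomputable section

/-- An axis-parallel half-open cube in `ℝⁿ`, given by its corner `a` and side length `l`. -/
structure QCube (n : ℕ) where
  a : Fin n → ℝ
  l : ℝ

/-- The half-open cube as a subset of `ℝⁿ`. -/
def QCube.pts {n : ℕ} (Q : QCube n) : Set (EuclideanSpace ℝ (Fin n)) :=
  {x | ∀ i, Q.a i ≤ x i ∧ x i < Q.a i + Q.l}

/-- The center of a cube. -/
def QCube.center {n : ℕ} (Q : QCube n) : EuclideanSpace ℝ (Fin n) :=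
  (EuclideanSpace.equiv (Fin n) ℝ).symm fun i => Q.a i + Q.l / 2

/-- The concentric dilate `γQ` of a cube `Q`. -/
def QCube.dilate {n : ℕ} (Q : QCube n) (γ : ℝ) : QCube n :=
  ⟨fun i => Q.a i + Q.l / 2 - γ * Q.l / 2, γ * Q.l⟩

/-- The `m`-weighted `α`-fractional Poisson integral
`P^α_m(Q,μ) = ∫ ℓ(Q)^m / (ℓ(Q)+|y−c_Q|)^{n+m−α} dμ(y)`; `P^α = P^α_1`. -/
def poissonM {n : ℕ} (α m : ℝ) (Q : QCube n)
    (μ : Measure (EuclideanSpace ℝ (Fin n))) : ℝ≥0∞ :=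
  ∫⁻ y, ENNReal.ofReal (Q.l ^ m / (Q.l + dist y Q.center) ^ ((n : ℝ) + m - α)) ∂μ

/-- `K` is an `α`-standard fractional kernel of order `1+δ` with constant `CCZ`. -/
def IsStandardKernel (n : ℕ) (α δ CCZ : ℝ)
    (K : EuclideanSpace ℝ (Fin n) → EuclideanSpace ℝ (Fin n) → ℝ) : Prop :=
  (∀ y, ContDiffOn ℝ 1 (fun x => K x y) {y}ᶜ) ∧
  (∀ x, ContDiffOn ℝ 1 (fun y => K x y) {x}ᶜ) ∧
  (∀ x y, x ≠ y → |K x y| ≤ CCZ * ‖x - y‖ ^ (α - (n : ℝ))) ∧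
  (∀ x y, x ≠ y →
    ‖fderiv ℝ (fun z => K z y) x‖ + ‖fderiv ℝ (fun z => K x z) y‖
      ≤ CCZ * ‖x - y‖ ^ (α - (n : ℝ) - 1)) ∧
  (∀ x x' y, x ≠ y → ‖x - x'‖ ≤ 1 / 2 * ‖x - y‖ →
    ‖fderiv ℝ (fun z => K z y) x - fderiv ℝ (fun z => K z y) x'‖
      ≤ CCZ * (‖x - x'‖ / ‖x - y‖) ^ δ * ‖x - y‖ ^ (α - (n : ℝ) - 1)) ∧
  (∀ x y y', x ≠ y → ‖y - y'‖ ≤ 1 / 2 * ‖x - y‖ →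
    ‖fderiv ℝ (fun z => K x z) y - fderiv ℝ (fun z => K x z) y'‖
      ≤ CCZ * (‖y - y'‖ / ‖x - y‖) ^ δ * ‖x - y‖ ^ (α - (n : ℝ) - 1))

/-- The `ω`-mean `m_J = ω(J)^{−1} ∫_J x dω(x)` of the identity over a cube `J`. -/
def wMean {n : ℕ} (ω : Measure (EuclideanSpace ℝ (Fin n))) (J : QCube n) :
    EuclideanSpace ℝ (Fin n) :=
  (ω J.pts).toReal⁻¹ • ∫ x in J.pts, x ∂ω

theorem EuclideanSpace.norm_le_sqrt_card_mul {ι : Type*} [Fintype ι] {x : EuclideanSpace ℝ ι}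
    {r : ℝ} (h : ∀ i, |x i| ≤ r) : ‖x‖ ≤ √(Fintype.card ι) * r := by
  cases isEmpty_or_nonempty ι
  · simp [Subsingleton.elim x 0]
  have hr : 0 ≤ r := (abs_nonneg _).trans (h (Classical.arbitrary ι))
  calc ‖x‖ = √(∑ i, ‖x i‖ ^ 2) := EuclideanSpace.norm_eq x
    _ ≤ √(∑ _i : ι, r ^ 2) := by
      gcongr with i
      rw [Real.norm_eq_abs]
      exact h i
    _ = √(Fintype.card ι) * r := by
      rw [Finset.sum_const, Finset.card_univ, nsmul_eq_mul, Real.sqrt_mul (Nat.cast_nonneg _),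
        Real.sqrt_sq hr]

namespace QCube

variable {n : ℕ}

/-- Unlike the circumscribed ball, the closed cube stays at distance `ℓ/2` from every point
outside `2Q`, and it is convex and closed, so it contains the `ω`-mean of `Q`. -/
def closedPts (Q : QCube n) : Set (EuclideanSpace ℝ (Fin n)) :=
  ⋂ i, EuclideanSpace.proj i ⁻¹' Metric.closedBall (Q.center i) (Q.l / 2)

theorem mem_closedPts {Q : QCube n} {x : EuclideanSpace ℝ (Fin n)} :
    x ∈ Q.closedPts ↔ ∀ i, |x i - Q.center i| ≤ Q.l / 2 := by
  simp [closedPts, Real.dist_eq]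

theorem convex_closedPts (Q : QCube n) : Convex ℝ Q.closedPts :=
  convex_iInter fun i => (convex_closedBall _ _).linear_preimage (EuclideanSpace.proj i).toLinearMap

theorem isClosed_closedPts (Q : QCube n) : IsClosed Q.closedPts :=
  isClosed_iInter fun i => Metric.isClosed_closedBall.preimage (EuclideanSpace.proj i).continuous

theorem measurableSet_pts (Q : QCube n) : MeasurableSet Q.pts := by
  have : Q.pts = ⋂ i, EuclideanSpace.proj i ⁻¹' Set.Ico (Q.a i) (Q.a i + Q.l) := by
    ext x; simp [pts]
  rw [this]
  exact .iInter fun i => (EuclideanSpace.proj i).continuous.measurable measurableSet_Ico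

theorem pts_subset_closedPts (Q : QCube n) : Q.pts ⊆ Q.closedPts := fun x hx =>
  mem_closedPts.2 fun i => by
    have hc : Q.center i = Q.a i + Q.l / 2 := rfl
    rw [hc, abs_le]
    constructor <;> linarith [hx i]

theorem norm_sub_center_le {Q : QCube n} {x : EuclideanSpace ℝ (Fin n)} (hx : x ∈ Q.closedPts) :
    ‖x - Q.center‖ ≤ √n * (Q.l / 2) := by
  simpa using EuclideanSpace.norm_le_sqrt_card_mul fun i => mem_closedPts.1 hx i

theorem norm_sub_le_of_mem_closedPts {Q : QCube n} {x x' : EuclideanSpace ℝ (Fin n)}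
    (hx : x ∈ Q.closedPts) (hx' : x' ∈ Q.closedPts) : ‖x - x'‖ ≤ √n * Q.l := by
  calc ‖x - x'‖ = ‖(x - Q.center) - (x' - Q.center)‖ := by rw [sub_sub_sub_cancel_right]
    _ ≤ ‖x - Q.center‖ + ‖x' - Q.center‖ := norm_sub_le _ _
    _ ≤ √n * Q.l := by linarith [norm_sub_center_le hx, norm_sub_center_le hx']

theorem exists_le_abs_sub_center_of_notMem_dilate_two {Q : QCube n}
    {y : EuclideanSpace ℝ (Fin n)} (hy : y ∉ (Q.dilate 2).pts) :
    ∃ i, Q.l ≤ |y i - Q.center i| := by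
  simp only [dilate, pts, Set.mem_ofPred_eq, not_forall, not_and, not_lt] at hy
  obtain ⟨i, hi⟩ := hy
  have hc : Q.center i = Q.a i + Q.l / 2 := rfl
  refine ⟨i, ?_⟩
  rw [hc, le_abs]
  by_cases h : Q.a i + Q.l / 2 - 2 * Q.l / 2 ≤ y i
  · left; linarith [hi h]
  · right; linarith

theorem add_dist_center_le_of_notMem_dilate_two {Q : QCube n} {y z : EuclideanSpace ℝ (Fin n)}
    (hy : y ∉ (Q.dilate 2).pts) (hz : z ∈ Q.closedPts) :
    Q.l + dist y Q.center ≤ (3 + √n) * ‖z - y‖ := by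
  obtain ⟨i, hi⟩ := exists_le_abs_sub_center_of_notMem_dilate_two hy
  have hzi := mem_closedPts.1 hz i
  have hcoord : |y i - z i| ≤ ‖z - y‖ := by
    rw [norm_sub_rev]; exact PiLp.norm_apply_le (y - z) i
  have hhalf : Q.l / 2 ≤ ‖z - y‖ := by
    have := abs_sub_abs_le_abs_sub (y i - Q.center i) (z i - Q.center i)
    rw [sub_sub_sub_cancel_right] at this
    linarith
  have hdist : dist y Q.center ≤ ‖z - y‖ + √n * (Q.l / 2) := by
    calc dist y Q.center ≤ dist y z + dist z Q.center := dist_triangle _ _ _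
      _ = ‖z - y‖ + ‖z - Q.center‖ := by rw [dist_eq_norm, dist_eq_norm, norm_sub_rev y z]
      _ ≤ ‖z - y‖ + √n * (Q.l / 2) := by linarith [norm_sub_center_le hz]
  nlinarith [mul_le_mul_of_nonneg_left hhalf (Real.sqrt_nonneg n)]

def poissonKernel (α m : ℝ) (Q : QCube n) (y : EuclideanSpace ℝ (Fin n)) : ℝ :=
  Q.l ^ m / (Q.l + dist y Q.center) ^ ((n : ℝ) + m - α)

theorem poissonKernel_nonneg {Q : QCube n} (hl : 0 ≤ Q.l) (α m : ℝ)
    (y : EuclideanSpace ℝ (Fin n)) : 0 ≤ Q.poissonKernel α m y :=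
  div_nonneg (Real.rpow_nonneg hl _) (Real.rpow_nonneg (by positivity) _)

theorem poissonM_eq_lintegral_poissonKernel (α m : ℝ) (Q : QCube n)
    (μ : Measure (EuclideanSpace ℝ (Fin n))) :
    poissonM α m Q μ = ∫⁻ y, ENNReal.ofReal (Q.poissonKernel α m y) ∂μ :=
  rfl

end QCube

def pivotalConst (n : ℕ) (α : ℝ) : ℝ :=
  √n * (3 + √n) ^ ((n : ℝ) + 1 - α)

theorem pivotalConst_nonneg (n : ℕ) (α : ℝ) : 0 ≤ pivotalConst n α := by
  unfold pivotalConst; positivity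

theorem pivotalConst_pos {n : ℕ} (hn : 1 ≤ n) (α : ℝ) : 0 < pivotalConst n α :=
  mul_pos (Real.sqrt_pos.2 (by exact_mod_cast hn)) (by positivity)

theorem wMean_mem_closedPts {n : ℕ} {ω : Measure (EuclideanSpace ℝ (Fin n))} {J : QCube n}
    (hJ0 : ω J.pts ≠ 0) (hJtop : ω J.pts ≠ ⊤) : wMean ω J ∈ J.closedPts := by
  have hbound : ∀ᵐ x ∂ω.restrict J.pts, ‖x‖ ≤ ‖J.center‖ + √n * (J.l / 2) :=
    ae_restrict_of_forall_mem J.measurableSet_pts fun x hx => by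
      have := J.norm_sub_center_le (J.pts_subset_closedPts hx)
      calc ‖x‖ = ‖(x - J.center) + J.center‖ := by rw [sub_add_cancel]
        _ ≤ ‖J.center‖ + √n * (J.l / 2) := by linarith [norm_add_le (x - J.center) J.center]
  have hmean := J.convex_closedPts.set_average_mem J.isClosed_closedPts hJ0 hJtop
    (ae_restrict_of_forall_mem J.measurableSet_pts J.pts_subset_closedPts)
    (IntegrableOn.of_bound hJtop.lt_top aestronglyMeasurable_id _ hbound)
  rwa [setAverage_eq, measureReal_def] at hmean

section Integrals

variable {X E : Type*} [MeasurableSpace X] [NormedAddCommGroup E] {μ : Measure X}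

theorem norm_integral_le_mul_toReal_lintegral [NormedSpace ℝ E] {f : X → E} {g : X → ℝ}
    {A : ℝ} (hA : 0 ≤ A) (hfg : ∀ᵐ x ∂μ, ‖f x‖ ≤ A * g x)
    (hg : ∫⁻ x, ENNReal.ofReal (g x) ∂μ ≠ ⊤) :
    ‖∫ x, f x ∂μ‖ ≤ A * (∫⁻ x, ENNReal.ofReal (g x) ∂μ).toReal := by
  have hAg : ∫⁻ x, ENNReal.ofReal (A * g x) ∂μ
      = ENNReal.ofReal A * ∫⁻ x, ENNReal.ofReal (g x) ∂μ := by
    simp_rw [ENNReal.ofReal_mul hA]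
    exact lintegral_const_mul' _ _ ENNReal.ofReal_ne_top
  calc ‖∫ x, f x ∂μ‖ ≤ (∫⁻ x, ENNReal.ofReal ‖f x‖ ∂μ).toReal := norm_integral_le_lintegral_norm f
    _ ≤ (∫⁻ x, ENNReal.ofReal (A * g x) ∂μ).toReal := by
      refine ENNReal.toReal_mono ?_
        (lintegral_mono_ae (hfg.mono fun x hx => ENNReal.ofReal_le_ofReal hx))
      rw [hAg]
      exact ENNReal.mul_ne_top ENNReal.ofReal_ne_top hg
    _ = A * (∫⁻ x, ENNReal.ofReal (g x) ∂μ).toReal := by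
      rw [hAg, ENNReal.toReal_mul, ENNReal.toReal_ofReal hA]

theorem setLIntegral_ofReal_norm_le_eLpNorm_two_mul {f : X → E} (hf : AEStronglyMeasurable f μ)
    (s : Set X) : ∫⁻ x in s, ENNReal.ofReal ‖f x‖ ∂μ ≤ eLpNorm f 2 μ * μ s ^ (1 / 2 : ℝ) := by
  have h := eLpNorm_le_eLpNorm_mul_rpow_measure_univ one_le_two (hf.restrict (s := s))
  have hexp : 1 / (1 : ℝ≥0∞).toReal - 1 / (2 : ℝ≥0∞).toReal = 1 / 2 := by norm_num
  rw [eLpNorm_one_eq_lintegral_enorm, Measure.restrict_apply_univ, hexp] at h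
  simp_rw [ofReal_norm]
  exact h.trans (by gcongr; exact Measure.restrict_le_self)

end Integrals

namespace IsStandardKernel

variable {n : ℕ} {α δ CCZ : ℝ} {K : EuclideanSpace ℝ (Fin n) → EuclideanSpace ℝ (Fin n) → ℝ}

theorem abs_sub_le_of_convex (hK : IsStandardKernel n α δ CCZ K) (hCCZ : 0 ≤ CCZ)
    (hαn : α ≤ n + 1) {S : Set (EuclideanSpace ℝ (Fin n))} (hS : Convex ℝ S)
    {y : EuclideanSpace ℝ (Fin n)} {R : ℝ} (hR : 0 < R) (hSy : ∀ z ∈ S, R ≤ ‖z - y‖)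
    {x x' : EuclideanSpace ℝ (Fin n)} (hx : x ∈ S) (hx' : x' ∈ S) :
    |K x y - K x' y| ≤ CCZ * R ^ (α - n - 1) * ‖x - x'‖ := by
  have hne : ∀ z ∈ S, z ≠ y := fun z hz hzy => by
    have := hSy z hz
    rw [hzy, sub_self, norm_zero] at this
    linarith
  have hderiv : ∀ z ∈ S, HasFDerivWithinAt (K · y) (fderiv ℝ (K · y) z) S z := fun z hz =>
    (((hK.1 y).differentiableOn one_ne_zero).differentiableAt
      (isOpen_compl_singleton.mem_nhds (hne z hz))).hasFDerivAt.hasFDerivWithinAt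
  have hbound : ∀ z ∈ S, ‖fderiv ℝ (K · y) z‖ ≤ CCZ * R ^ (α - n - 1) := fun z hz =>
    calc ‖fderiv ℝ (K · y) z‖ ≤ CCZ * ‖z - y‖ ^ (α - n - 1) :=
          le_of_add_le_of_nonneg_left (hK.2.2.2.1 z y (hne z hz)) (norm_nonneg _)
      _ ≤ CCZ * R ^ (α - n - 1) := mul_le_mul_of_nonneg_left
          (Real.rpow_le_rpow_of_nonpos hR (hSy z hz) (by linarith)) hCCZ
  exact hS.norm_image_sub_le_of_norm_hasFDerivWithin_le hderiv hbound hx' hx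

theorem abs_sub_le_poissonKernel (hK : IsStandardKernel n α δ CCZ K) (hCCZ : 0 ≤ CCZ)
    (hαn : α ≤ n + 1) {J : QCube n} (hl : 0 < J.l) {y : EuclideanSpace ℝ (Fin n)}
    (hy : y ∉ (J.dilate 2).pts) {x x' : EuclideanSpace ℝ (Fin n)} (hx : x ∈ J.closedPts)
    (hx' : x' ∈ J.closedPts) :
    |K x y - K x' y| ≤ CCZ * pivotalConst n α * J.poissonKernel α 1 y := by
  have h3 : 0 < 3 + √n := by positivity
  have hd : 0 < J.l + dist y J.center := by positivity
  have hR : 0 < (J.l + dist y J.center) / (3 + √n) := by positivity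
  have hmvt := hK.abs_sub_le_of_convex hCCZ hαn J.convex_closedPts hR
    (fun z hz => (div_le_iff₀' h3).2 (QCube.add_dist_center_le_of_notMem_dilate_two hy hz)) hx hx'
  have hpow : ((J.l + dist y J.center) / (3 + √n)) ^ (α - n - 1)
      = (3 + √n) ^ ((n : ℝ) + 1 - α) / (J.l + dist y J.center) ^ ((n : ℝ) + 1 - α) := by
    rw [show α - n - 1 = -((n : ℝ) + 1 - α) by ring, Real.rpow_neg hR.le,
      Real.div_rpow hd.le h3.le, inv_div]
  calc |K x y - K x' y|
      ≤ CCZ * ((J.l + dist y J.center) / (3 + √n)) ^ (α - n - 1) * (√n * J.l) := by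
        refine hmvt.trans ?_
        gcongr
        exact J.norm_sub_le_of_mem_closedPts hx hx'
    _ = _ := by rw [hpow, pivotalConst, QCube.poissonKernel, Real.rpow_one]; ring

theorem norm_setIntegral_sub_wMean_mul_le (hK : IsStandardKernel n α δ CCZ K) (hCCZ : 0 ≤ CCZ)
    (hαn : α ≤ n + 1) {ω : Measure (EuclideanSpace ℝ (Fin n))} {J : QCube n} (hl : 0 < J.l)
    (hJ0 : ω J.pts ≠ 0) (hJtop : ω J.pts ≠ ⊤) {Ψ : EuclideanSpace ℝ (Fin n) → ℝ}
    (hΨ : MemLp Ψ 2 ω) {y : EuclideanSpace ℝ (Fin n)} (hy : y ∉ (J.dilate 2).pts) :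
    ‖∫ x in J.pts, (K x y - K (wMean ω J) y) * Ψ x ∂ω‖
      ≤ pivotalConst n α * CCZ * (eLpNorm Ψ 2 ω).toReal * √(ω J.pts).toReal
        * J.poissonKernel α 1 y := by
  have hA : 0 ≤ CCZ * pivotalConst n α * J.poissonKernel α 1 y :=
    mul_nonneg (mul_nonneg hCCZ (pivotalConst_nonneg n α)) (J.poissonKernel_nonneg hl.le α 1 y)
  have hkernel : ∀ x ∈ J.pts, ‖(K x y - K (wMean ω J) y) * Ψ x‖
      ≤ CCZ * pivotalConst n α * J.poissonKernel α 1 y * ‖Ψ x‖ := fun x hx => by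
    rw [norm_mul, Real.norm_eq_abs]
    exact mul_le_mul_of_nonneg_right (hK.abs_sub_le_poissonKernel hCCZ hαn hl hy
      (J.pts_subset_closedPts hx) (wMean_mem_closedPts hJ0 hJtop)) (norm_nonneg _)
  have hCS := setLIntegral_ofReal_norm_le_eLpNorm_two_mul hΨ.1 J.pts
  have hCS_top : eLpNorm Ψ 2 ω * ω J.pts ^ (1 / 2 : ℝ) ≠ ⊤ :=
    ENNReal.mul_ne_top hΨ.2.ne (by finiteness)
  calc _ ≤ CCZ * pivotalConst n α * J.poissonKernel α 1 y
          * (∫⁻ x in J.pts, ENNReal.ofReal ‖Ψ x‖ ∂ω).toReal :=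
        norm_integral_le_mul_toReal_lintegral hA
          (ae_restrict_of_forall_mem J.measurableSet_pts hkernel) (ne_top_of_le_ne_top hCS_top hCS)
    _ ≤ CCZ * pivotalConst n α * J.poissonKernel α 1 y
          * (eLpNorm Ψ 2 ω * ω J.pts ^ (1 / 2 : ℝ)).toReal := by
        gcongr
    _ = _ := by
        rw [ENNReal.toReal_mul, ← ENNReal.toReal_rpow, ← Real.sqrt_eq_rpow]
        ring

end IsStandardKernel

theorem statement8_general (n : ℕ) (α δ : ℝ) (hn : 1 ≤ n) (hαn : α < n) :
    ∃ C : ℝ, 0 < C ∧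
      ∀ CCZ : ℝ, 0 < CCZ →
      ∀ K : EuclideanSpace ℝ (Fin n) → EuclideanSpace ℝ (Fin n) → ℝ,
        IsStandardKernel n α δ CCZ K →
      ∀ ω ν : Measure (EuclideanSpace ℝ (Fin n)),
        IsLocallyFiniteMeasure ω → IsLocallyFiniteMeasure ν →
      ∀ J : QCube n, 0 < J.l → ω J.pts ≠ 0 → ω J.pts ≠ ⊤ →
        -- `supp ν ∩ 2J = ∅` : every point of `2J` has a `ν`-null neighborhood
        (∀ x ∈ (J.dilate 2).pts, ∃ U ∈ nhds x, ν U = 0) →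
        poissonM α 1 J ν ≠ ⊤ →
      ∀ Ψ : EuclideanSpace ℝ (Fin n) → ℝ,
        MemLp Ψ 2 ω → Function.support Ψ ⊆ J.pts → (∫ x, Ψ x ∂ω) = 0 →
        |∫ y, (∫ x in J.pts, (K x y - K (wMean ω J) y) * Ψ x ∂ω) ∂ν|
          ≤ C * CCZ * (eLpNorm Ψ 2 ω).toReal * (poissonM α 1 J ν).toReal
              * Real.sqrt (ω J.pts).toReal := by
  refine ⟨pivotalConst n α, pivotalConst_pos hn α, ?_⟩
  intro CCZ hCCZ K hK ω ν _ _ J hl hJ0 hJtop hsupp hP Ψ hΨ _ _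
  have hν : ∀ᵐ y ∂ν, y ∉ (J.dilate 2).pts := measure_eq_zero_iff_ae_notMem.1 <|
    measure_null_of_locally_null _ fun x hx =>
      (hsupp x hx).imp fun _ hU => ⟨nhdsWithin_le_nhds hU.1, hU.2⟩
  have hinner := fun y (hy : y ∉ (J.dilate 2).pts) =>
    hK.norm_setIntegral_sub_wMean_mul_le hCCZ.le (by linarith) hl hJ0 hJtop hΨ hy
  rw [QCube.poissonM_eq_lintegral_poissonKernel] at hP ⊢
  rw [← Real.norm_eq_abs, mul_right_comm _ (∫⁻ y, _ ∂ν).toReal]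
  have hA : 0 ≤ pivotalConst n α * CCZ * (eLpNorm Ψ 2 ω).toReal * √(ω J.pts).toReal :=
    mul_nonneg (mul_nonneg (mul_nonneg (pivotalConst_nonneg n α) hCCZ.le) ENNReal.toReal_nonneg)
      (Real.sqrt_nonneg _)
  exact norm_integral_le_mul_toReal_lintegral hA (hν.mono hinner) hP

/-- **Pivotal bound of the Energy Lemma.** For an `α`-standard fractional
kernel `K` of order `1+δ`, a cube `J` with `0 < ω(J) < ∞` and `m_J = ω(J)^{−1}∫_J x dω`,
and a positive measure `ν` with `supp ν ∩ 2J = ∅` and `P^α(J,ν) < ∞`, every mean-zero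
`Ψ ∈ L²(ω)` supported in `J` satisfies
`|∫ (∫_J (K(x,y) − K(m_J,y)) Ψ(x) dω(x)) dν(y)| ≤ C·C_CZ·‖Ψ‖_{L²(ω)}·P^α(J,ν)·√(ω(J))`,
with `C = C(n,α,δ)`. -/
theorem statement8 (n : ℕ) (α δ : ℝ) (hn : 1 ≤ n) (hα0 : 0 ≤ α) (hαn : α < n)
    (hδ0 : 0 < δ) (hδ1 : δ ≤ 1) :
    ∃ C : ℝ, 0 < C ∧
      ∀ CCZ : ℝ, 0 < CCZ →
      ∀ K : EuclideanSpace ℝ (Fin n) → EuclideanSpace ℝ (Fin n) → ℝ,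
        IsStandardKernel n α δ CCZ K →
      ∀ ω ν : Measure (EuclideanSpace ℝ (Fin n)),
        IsLocallyFiniteMeasure ω → IsLocallyFiniteMeasure ν →
      ∀ J : QCube n, 0 < J.l → ω J.pts ≠ 0 → ω J.pts ≠ ⊤ →
        -- `supp ν ∩ 2J = ∅` : every point of `2J` has a `ν`-null neighborhood
        (∀ x ∈ (J.dilate 2).pts, ∃ U ∈ nhds x, ν U = 0) →
        poissonM α 1 J ν ≠ ⊤ →
      ∀ Ψ : EuclideanSpace ℝ (Fin n) → ℝ,
        MemLp Ψ 2 ω → Function.support Ψ ⊆ J.pts → (∫ x, Ψ x ∂ω) = 0 →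
        |∫ y, (∫ x in J.pts, (K x y - K (wMean ω J) y) * Ψ x ∂ω) ∂ν|
          ≤ C * CCZ * (eLpNorm Ψ 2 ω).toReal * (poissonM α 1 J ν).toReal
              * Real.sqrt (ω J.pts).toReal :=
  statement8_general n α δ hn hαn
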